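/- For the Gaussian β-characteristic time T*_{KL,β}(ν)^{-1} = max_{ω ∈ Σ_K, ω_{a*}=β} min_{a≠a*} (μ_{a*}-μ_a)²/(2σ²(1/β + 1/ω_a)) and T*_KL(ν) = min_{β ∈ (0,1)} T*_{KL,β}(ν), it holds that T*_{KL,1/2}(ν) ≤ 2 T*_KL(ν). -/

import Mathlib

open scoped BigOperators

/-- Inverse `β`-characteristic time for a Gaussian instance with variance `σ²`,
means `μ` and best arm `0`. -/
noncomputable def betaCharInv {K : ℕ} (σ β : ℝ) (μ : Fin (K + 2) → ℝ) : ℝ :=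
  ⨆ ω : {ω : Fin (K + 2) → ℝ // (∀ a, 0 ≤ ω a) ∧ (∑ a, ω a) = 1 ∧ ω 0 = β},
    ⨅ a : {a : Fin (K + 2) // a ≠ 0},
      (μ 0 - μ a.1) ^ 2 / (2 * σ ^ 2 * (1 / β + 1 / ω.1 a.1))

/-!
Given an allocation `ω` with weight `β` on the best arm, rescale the other weights by
`1 / (2 (1 - β))` to get an allocation with weight `1/2` on the best arm. Each denominator
`1/β + 1/ω_a` becomes `2 + 2 (1 - β) / ω_a`, which is at most twice the old one since `2 ≤ 2/β`.
So no arm's cost drops by more than a factor `2`, and the inverse characteristic time at `β`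
is at most twice the one at `1/2`. Inverting this for each `β ∈ (0, 1)` gives the claim.
-/

section

variable {K : ℕ}

abbrev Alloc (K : ℕ) (β : ℝ) : Type :=
  {ω : Fin (K + 2) → ℝ // (∀ a, 0 ≤ ω a) ∧ (∑ a, ω a) = 1 ∧ ω 0 = β}

noncomputable def allocValue (σ β : ℝ) (μ ω : Fin (K + 2) → ℝ) : ℝ :=
  ⨅ a : {a : Fin (K + 2) // a ≠ 0}, (μ 0 - μ a.1) ^ 2 / (2 * σ ^ 2 * (1 / β + 1 / ω a.1))

theorem betaCharInv_eq_iSup (σ β : ℝ) (μ : Fin (K + 2) → ℝ) :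
    betaCharInv σ β μ = ⨆ ω : Alloc K β, allocValue σ β μ ω.1 :=
  rfl

theorem Alloc.nonempty {β : ℝ} (hβ0 : 0 ≤ β) (hβ1 : β ≤ 1) : Nonempty (Alloc K β) := by
  refine ⟨⟨fun a => if a = 0 then β else (1 - β) / (K + 1), fun a => ?_, ?_, if_pos rfl⟩⟩
  · dsimp only
    split_ifs
    exacts [hβ0, div_nonneg (sub_nonneg.2 hβ1) (by positivity)]
  · simp only [Fin.sum_univ_succ, ↓reduceIte, Fin.succ_ne_zero, Finset.sum_const,
      Finset.card_univ, Fintype.card_fin, nsmul_eq_mul, Nat.cast_add, Nat.cast_one]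
    field_simp
    ring

theorem Alloc.sum_succ {β : ℝ} (ω : Alloc K β) : ∑ i : Fin (K + 1), ω.1 i.succ = 1 - β := by
  have h := ω.2.2.1
  rw [Fin.sum_univ_succ, ω.2.2.2] at h
  linarith

noncomputable def Alloc.rescale {β : ℝ} (ω : Alloc K β) (hβ : β < 1) (γ : ℝ) (hγ0 : 0 ≤ γ)
    (hγ1 : γ ≤ 1) : Alloc K γ := by
  refine ⟨fun a => if a = 0 then γ else (1 - γ) / (1 - β) * ω.1 a, fun a => ?_, ?_, if_pos rfl⟩
  · dsimp only
    split_ifs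
    exacts [hγ0, mul_nonneg (div_nonneg (by linarith) (by linarith)) (ω.2.1 a)]
  · simp only [Fin.sum_univ_succ, if_pos, Fin.succ_ne_zero, if_false, ← Finset.mul_sum,
      ω.sum_succ]
    field_simp [(sub_pos.2 hβ).ne']
    ring

theorem half_add_inv_rescale_le {β w : ℝ} (hβ0 : 0 < β) (hβ1 : β < 1) (hw : 0 ≤ w) :
    1 / (1 / 2) + 1 / ((1 - 1 / 2) / (1 - β) * w) ≤ 2 * (1 / β + 1 / w) := by
  have hrescale : 1 / ((1 - 1 / 2) / (1 - β) * w) = 2 * (1 - β) * w⁻¹ := by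
    rw [one_div, mul_inv, inv_div]
    ring
  have hβ : 2 ≤ 2 * (1 / β) := (le_mul_iff_one_le_right two_pos).2 (one_le_one_div hβ0 hβ1.le)
  have hshrink : 2 * (1 - β) * w⁻¹ ≤ 2 * w⁻¹ := by
    nlinarith [inv_nonneg.2 hw]
  rw [hrescale, one_div w]
  linarith [show (1 : ℝ) / (1 / 2) = 2 by norm_num]

theorem div_le_two_mul_div_of_le {x d d' : ℝ} (hx : 0 ≤ x) (hd' : 0 < d') (h : d' ≤ 2 * d) :
    x / d ≤ 2 * (x / d') := by
  have hd : 0 < d := by linarith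
  calc x / d = 2 * (x / (2 * d)) := by field_simp
    _ ≤ 2 * (x / d') := by gcongr

theorem allocValue_le_two_mul_rescale {σ β : ℝ} (hσ : 0 < σ) (hβ0 : 0 < β) (hβ1 : β < 1)
    (μ : Fin (K + 2) → ℝ) (ω : Alloc K β) :
    allocValue σ β μ ω.1 ≤
      2 * allocValue σ (1 / 2) μ (ω.rescale hβ1 (1 / 2) (by norm_num) (by norm_num)).1 := by
  rw [allocValue, allocValue, Real.mul_iInf_of_nonneg zero_le_two]
  refine ciInf_mono (Set.finite_range _).bddBelow fun a => ?_
  have hrescale : (ω.rescale hβ1 (1 / 2) (by norm_num) (by norm_num)).1 a.1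
      = (1 - 1 / 2) / (1 - β) * ω.1 a.1 := if_neg a.2
  rw [hrescale]
  have hw : 0 ≤ (1 - 1 / 2) / (1 - β) * ω.1 a.1 :=
    mul_nonneg (div_nonneg (by norm_num) (by linarith)) (ω.2.1 a.1)
  refine div_le_two_mul_div_of_le (sq_nonneg _) (by positivity) ?_
  calc 2 * σ ^ 2 * (1 / (1 / 2) + 1 / ((1 - 1 / 2) / (1 - β) * ω.1 a.1))
      ≤ 2 * σ ^ 2 * (2 * (1 / β + 1 / ω.1 a.1)) := by
        gcongr
        exact half_add_inv_rescale_le hβ0 hβ1 (ω.2.1 a.1)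
    _ = 2 * (2 * σ ^ 2 * (1 / β + 1 / ω.1 a.1)) := by ring

theorem bddAbove_allocValue {σ β : ℝ} (hσ : 0 < σ) (hβ : 0 < β) (μ : Fin (K + 2) → ℝ) :
    BddAbove (Set.range fun ω : Alloc K β => allocValue σ β μ ω.1) := by
  refine ⟨(μ 0 - μ 1) ^ 2 / (2 * σ ^ 2 * (1 / β)), ?_⟩
  rintro _ ⟨ω, rfl⟩
  refine (ciInf_le (Set.finite_range _).bddBelow ⟨1, one_ne_zero⟩).trans ?_
  have := ω.2.1 1
  gcongr
  exact le_add_of_nonneg_right (by positivity)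

theorem allocValue_pos {σ β : ℝ} (hσ : 0 < σ) (hβ : 0 < β) {μ ω : Fin (K + 2) → ℝ}
    (hbest : ∀ a, a ≠ 0 → μ a < μ 0) (hω : ∀ a, 0 ≤ ω a) : 0 < allocValue σ β μ ω := by
  have : Nonempty {a : Fin (K + 2) // a ≠ 0} := ⟨⟨1, one_ne_zero⟩⟩
  obtain ⟨a, ha⟩ := exists_eq_ciInf_of_finite (f := fun a : {a : Fin (K + 2) // a ≠ 0} =>
    (μ 0 - μ a.1) ^ 2 / (2 * σ ^ 2 * (1 / β + 1 / ω a.1)))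
  rw [allocValue, ← ha]
  have := sub_pos.2 (hbest a.1 a.2)
  have := hω a.1
  positivity

theorem betaCharInv_pos {σ β : ℝ} (hσ : 0 < σ) (hβ0 : 0 < β) (hβ1 : β ≤ 1)
    {μ : Fin (K + 2) → ℝ} (hbest : ∀ a, a ≠ 0 → μ a < μ 0) : 0 < betaCharInv σ β μ := by
  obtain ⟨ω⟩ := Alloc.nonempty (K := K) hβ0.le hβ1
  rw [betaCharInv_eq_iSup]
  exact (allocValue_pos hσ hβ0 hbest ω.2.1).trans_le (le_ciSup (bddAbove_allocValue hσ hβ0 μ) ω)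

theorem betaCharInv_le_two_mul_half {σ β : ℝ} (hσ : 0 < σ) (hβ0 : 0 < β) (hβ1 : β < 1)
    (μ : Fin (K + 2) → ℝ) : betaCharInv σ β μ ≤ 2 * betaCharInv σ (1 / 2) μ := by
  have := Alloc.nonempty (K := K) hβ0.le hβ1.le
  rw [betaCharInv_eq_iSup, betaCharInv_eq_iSup]
  refine ciSup_le fun ω => (allocValue_le_two_mul_rescale hσ hβ0 hβ1 μ ω).trans ?_
  gcongr
  exact le_ciSup (bddAbove_allocValue hσ (by norm_num) μ) _

end

/-- `T*_{KL,1/2}(ν) ≤ 2 T*_KL(ν)`, where `T*_KL(ν) = min_{β ∈ (0,1)} T*_{KL,β}(ν)`. -/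
theorem half_beta_char_time_le_twice_min {K : ℕ} (σ : ℝ) (hσ : 0 < σ)
    (μ : Fin (K + 2) → ℝ) (hbest : ∀ a, a ≠ 0 → μ a < μ 0) :
    (betaCharInv σ (1 / 2) μ)⁻¹ ≤
      2 * ⨅ β : Set.Ioo (0 : ℝ) 1, (betaCharInv σ (β : ℝ) μ)⁻¹ := by
  have : Nonempty (Set.Ioo (0 : ℝ) 1) := ⟨⟨1 / 2, by norm_num⟩⟩
  rw [Real.mul_iInf_of_nonneg zero_le_two]
  refine le_ciInf fun ⟨β, hβ0, hβ1⟩ => ?_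
  calc (betaCharInv σ (1 / 2) μ)⁻¹ = 2 * (2 * betaCharInv σ (1 / 2) μ)⁻¹ := by ring
    _ ≤ 2 * (betaCharInv σ β μ)⁻¹ := by
      gcongr
      · exact betaCharInv_pos hσ hβ0 hβ1.le hbest
      · exact betaCharInv_le_two_mul_half hσ hβ0 hβ1 μ
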